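/- arXiv:2012.12154 — 4 statements merged into one kernel-verified Lean document; each statement's English description precedes it below -/
import Mathlib

section
/- Let 0 < d, 2d ≤ s, and let X, Y be independent random variables each uniformly distributed on [0,s]. For any r with d/s ≤ r ≤ 1 − d/s, the diversified position ν = (1−r)X + rY satisfies P(ν < d) = (1/2)·(d/s)²·(1/(r(1−r))). -/
/-!
By independence, `(X, Y)` has the uniform law on the square `[0, s]²`, so the probability is the
normalised area of `{x, y ≥ 0, (1 - r) x + r y < d}`. This triangle, with legs `d / (1 - r)` and
`d / r`, lies inside the square exactly when `d / s ≤ r ≤ 1 - d / s`; integrating its vertical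
slices gives the area `d² / (2 r (1 - r))`.
-/

open MeasureTheory ProbabilityTheory Set

/-- The uniform probability distribution on the interval `[0, s]`. -/
noncomputable def uniformOnIcc (s : ℝ) : Measure ℝ :=
  (ENNReal.ofReal s)⁻¹ • (volume.restrict (Icc (0 : ℝ) s))

theorem ProbabilityTheory.IndepFun.measure_mem_eq_prod_map {Ω β γ : Type*} [MeasurableSpace Ω]
    [MeasurableSpace β] [MeasurableSpace γ] {P : Measure Ω} [IsFiniteMeasure P] {X : Ω → β}
    {Y : Ω → γ} (hXY : IndepFun X Y P) (hX : Measurable X) (hY : Measurable Y)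
    {T : Set (β × γ)} (hT : MeasurableSet T) :
    P {ω | (X ω, Y ω) ∈ T} = ((P.map X).prod (P.map Y)) T := by
  rw [← hXY.map_prod_eq_prod_map_map hX.aemeasurable hY.aemeasurable,
    Measure.map_apply (hX.prodMk hY) hT]
  rfl

theorem MeasureTheory.Measure.prod_apply_setOf_mul_add_mul_lt {μ ν : Measure ℝ} [SFinite ν]
    (a r d : ℝ) (hr : 0 < r) :
    (μ.prod ν) {p | a * p.1 + r * p.2 < d} = ∫⁻ x, ν (Iio ((d - a * x) / r)) ∂μ := by
  rw [Measure.prod_apply (measurableSet_lt (by fun_prop) measurable_const)]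
  congr with x
  congr with y
  simp only [mem_preimage, mem_ofPred_eq, mem_Iio, lt_div_iff₀ hr]
  constructor <;> intro h <;> linarith

theorem lintegral_Icc_ofReal_sub_mul {a c s : ℝ} (ha : 0 < a) (hc : 0 ≤ c) (hcs : c ≤ a * s) :
    ∫⁻ x in Icc 0 s, ENNReal.ofReal (c - a * x) = ENNReal.ofReal (c ^ 2 / (2 * a)) := by
  have hca : 0 ≤ c / a := div_nonneg hc ha.le
  have hcas : c / a ≤ s := (div_le_iff₀' ha).2 hcs
  rw [← Icc_union_Ioc_eq_Icc hca hcas,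
    lintegral_union measurableSet_Ioc ((Iic_disjoint_Ioc le_rfl).mono_left Icc_subset_Iic_self),
    setLIntegral_eq_zero measurableSet_Ioc, add_zero]
  · rw [← ofReal_integral_eq_lintegral_ofReal, integral_Icc_eq_integral_Ioc,
      ← intervalIntegral.integral_of_le hca]
    · congr 1
      rw [intervalIntegral.integral_sub intervalIntegrable_const
        ((continuous_const_mul a).intervalIntegrable _ _), intervalIntegral.integral_const,
        intervalIntegral.integral_const_mul, integral_id, smul_eq_mul]
      field_simp
      ring
    · exact (by fun_prop : Continuous fun x => c - a * x).integrableOn_Icc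
    · refine ae_restrict_of_forall_mem measurableSet_Icc fun x hx => ?_
      simpa [sub_nonneg] using (le_div_iff₀' ha).1 hx.2
  · intro x hx
    simp only [Pi.zero_apply, ENNReal.ofReal_eq_zero, sub_nonpos]
    exact ((div_lt_iff₀' ha).1 hx.1).le

section uniformOnIcc

variable {s : ℝ}

instance : SFinite (uniformOnIcc s) := by
  unfold uniformOnIcc
  infer_instance

theorem uniformOnIcc_apply {A : Set ℝ} (hA : MeasurableSet A) :
    uniformOnIcc s A = (ENNReal.ofReal s)⁻¹ * volume (A ∩ Icc 0 s) := by
  rw [uniformOnIcc, Measure.smul_apply, Measure.restrict_apply hA, smul_eq_mul]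

theorem ae_mem_Icc_uniformOnIcc : ∀ᵐ x ∂uniformOnIcc s, x ∈ Icc 0 s :=
  Measure.ae_smul_measure (ae_restrict_mem measurableSet_Icc) _

theorem uniformOnIcc_Iio {t : ℝ} (hs : 0 < s) (ht : t ≤ s) :
    uniformOnIcc s (Iio t) = ENNReal.ofReal (t / s) := by
  have hIco : Iio t ∩ Icc 0 s = Ico 0 t := by
    ext x
    simp only [mem_inter_iff, mem_Iio, mem_Icc, mem_Ico]
    constructor
    · rintro ⟨hxt, hx0, -⟩
      exact ⟨hx0, hxt⟩
    · rintro ⟨hx0, hxt⟩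
      exact ⟨hxt, hx0, hxt.le.trans ht⟩
  rw [uniformOnIcc_apply measurableSet_Iio, hIco, Real.volume_Ico, sub_zero,
    ← ENNReal.ofReal_inv_of_pos hs, ← ENNReal.ofReal_mul (by positivity), inv_mul_eq_div]

theorem lintegral_uniformOnIcc_ofReal_sub_mul {a c : ℝ} (hs : 0 < s) (ha : 0 < a) (hc : 0 ≤ c)
    (hcs : c ≤ a * s) :
    ∫⁻ x, ENNReal.ofReal (c - a * x) ∂uniformOnIcc s = ENNReal.ofReal (c ^ 2 / (2 * a * s)) := by
  rw [uniformOnIcc, lintegral_smul_measure, lintegral_Icc_ofReal_sub_mul ha hc hcs, smul_eq_mul,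
    ← ENNReal.ofReal_inv_of_pos hs, ← ENNReal.ofReal_mul (by positivity)]
  congr 1
  field_simp

end uniformOnIcc

/-- for `d/s ≤ r ≤ 1 - d/s`, the diversified position `ν = (1-r)X + rY`
satisfies `P(ν < d) = (1/2)·(d/s)²·(1/(r(1-r)))`. -/
theorem prob_individual_default_large_r
    {Ω : Type*} [MeasurableSpace Ω] (P : Measure Ω) [IsProbabilityMeasure P]
    (s d : ℝ) (hd : 0 < d) (hs : 2 * d ≤ s)
    (X Y : Ω → ℝ) (hXm : Measurable X) (hYm : Measurable Y)
    (hX : P.map X = uniformOnIcc s) (hY : P.map Y = uniformOnIcc s)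
    (hXY : IndepFun X Y P)
    (r : ℝ) (hr0 : d / s ≤ r) (hr1 : r ≤ 1 - d / s) :
    P {ω | (1 - r) * X ω + r * Y ω < d}
      = ENNReal.ofReal ((1 / 2) * (d / s) ^ 2 * (1 / (r * (1 - r)))) := by
  have hs0 : 0 < s := by linarith
  have hds : 0 < d / s := div_pos hd hs0
  have hr : 0 < r := hds.trans_le hr0
  have h1r : 0 < 1 - r := hds.trans_le (by linarith)
  have hdr : d ≤ r * s := (div_le_iff₀ hs0).1 hr0
  have hd1r : d ≤ (1 - r) * s := (div_le_iff₀ hs0).1 (by linarith)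
  have hslice : ∀ x ∈ Icc 0 s, uniformOnIcc s (Iio ((d - (1 - r) * x) / r))
      = ENNReal.ofReal (d / (r * s) - (1 - r) / (r * s) * x) := by
    intro x hx
    rw [uniformOnIcc_Iio hs0 ((div_le_iff₀' hr).2 (by nlinarith [hx.1]))]
    congr 1
    field_simp
  calc P {ω | (1 - r) * X ω + r * Y ω < d}
      = ((P.map X).prod (P.map Y)) {p | (1 - r) * p.1 + r * p.2 < d} :=
        hXY.measure_mem_eq_prod_map hXm hYm (T := {p | (1 - r) * p.1 + r * p.2 < d})
          (measurableSet_lt (by fun_prop) measurable_const)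
    _ = ∫⁻ x, uniformOnIcc s (Iio ((d - (1 - r) * x) / r)) ∂uniformOnIcc s := by
        rw [hX, hY, Measure.prod_apply_setOf_mul_add_mul_lt _ _ _ hr]
    _ = ∫⁻ x, ENNReal.ofReal (d / (r * s) - (1 - r) / (r * s) * x) ∂uniformOnIcc s :=
        lintegral_congr_ae (ae_mem_Icc_uniformOnIcc.mono hslice)
    _ = ENNReal.ofReal ((d / (r * s)) ^ 2 / (2 * ((1 - r) / (r * s)) * s)) :=
        lintegral_uniformOnIcc_ofReal_sub_mul hs0 (by positivity) (by positivity) (by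
          rw [div_mul_eq_mul_div, div_le_div_iff_of_pos_right (by positivity)]; linarith)
    _ = ENNReal.ofReal ((1 / 2) * (d / s) ^ 2 * (1 / (r * (1 - r)))) := by
        congr 1
        field_simp
end

section
/- Let 0 < d < s and let X, Y be independent random variables each uniformly distributed on [0,s]. Let r₁, r₂ ∈ [0,1] with r₁ + r₂ ≥ 1 and suppose d ≤ s·r₁ and d ≤ s·r₂. Then the diversified positions ν₁ = (1−r₁)X + r₁Y and ν₂ = r₂X + (1−r₂)Y satisfy P(ν₁ ≤ d and ν₂ ≤ d) = (1/2)·(d/s)²·(1/r₁ + 1/r₂). -/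
/-!
Since `ν₁ - ν₂ = (r₁ + r₂ - 1) (Y - X)`, above the diagonal of `[0, s]²` only the constraint
`ν₁ ≤ d` binds and below it only `ν₂ ≤ d`. Hence the joint default region is the union of two
triangles meeting along the diagonal, with vertices `(0, 0), (d, d)` and `(0, d / r₁)`,
resp. `(d / r₂, 0)`; the conditions `d ≤ s rᵢ` keep them inside the square, and their areas are
`d² / (2 rᵢ)`.
-/

open MeasureTheory ProbabilityTheory Set

theorem MeasureTheory.Measure.prod_diagonal_eq_zero {α : Type*} [MeasurableSpace α]
    [MeasurableEq α] (μ ν : Measure α) [SFinite ν] [NullSingletonClass ν] :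
    μ.prod ν (diagonal α) = 0 := by
  rw [Measure.prod_apply measurableSet_diagonal]
  simp [preimage, diagonal]

lemma uniformOnIcc_prod_apply (s : ℝ) (T : Set (ℝ × ℝ)) :
    (uniformOnIcc s).prod (uniformOnIcc s) T
      = (ENNReal.ofReal s)⁻¹ ^ 2 * volume (T ∩ Icc 0 s ×ˢ Icc 0 s) := by
  rw [uniformOnIcc, Measure.prod_smul_left, Measure.prod_smul_right, Measure.prod_restrict,
    ← Measure.volume_eq_prod, smul_smul, Measure.smul_apply,
    Measure.restrict_apply' (measurableSet_Icc.prod measurableSet_Icc), smul_eq_mul, sq]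

/-- The closed triangle with vertices `(0, 0)`, `(0, d / r)` and `(d, d)`. -/
def defaultTriangle (r d : ℝ) : Set (ℝ × ℝ) :=
  {p | 0 ≤ p.1 ∧ p.1 ≤ p.2 ∧ (1 - r) * p.1 + r * p.2 ≤ d}

section defaultTriangle

variable {r d : ℝ}

lemma measurableSet_defaultTriangle : MeasurableSet (defaultTriangle r d) := by
  unfold defaultTriangle
  measurability

lemma volume_preimage_mk_defaultTriangle (hr : 0 < r) (x : ℝ) :
    volume (Prod.mk x ⁻¹' defaultTriangle r d)
      = (Icc 0 d).indicator (fun x ↦ ENNReal.ofReal ((d - x) / r)) x := by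
  by_cases hx : 0 ≤ x
  · have hsec : Prod.mk x ⁻¹' defaultTriangle r d = Icc x ((d - (1 - r) * x) / r) := by
      ext y
      simp only [defaultTriangle, mem_preimage, mem_ofPred_eq, mem_Icc, le_div_iff₀ hr, hx,
        true_and]
      constructor <;> rintro ⟨h₁, h₂⟩ <;> exact ⟨h₁, by linarith⟩
    have hlen : (d - (1 - r) * x) / r - x = (d - x) / r := by field_simp; ring
    rw [hsec, Real.volume_Icc, hlen, indicator_apply]
    split_ifs with hxd
    · rfl
    · simp only [mem_Icc, hx, true_and, not_le] at hxd
      exact ENNReal.ofReal_of_nonpos (div_nonpos_of_nonpos_of_nonneg (by linarith) hr.le)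
  · have hsec : Prod.mk x ⁻¹' defaultTriangle r d = ∅ := by
      ext y; simp [defaultTriangle, hx]
    simp [hsec, hx]

lemma volume_defaultTriangle (hr : 0 < r) (hd : 0 ≤ d) :
    volume (defaultTriangle r d) = ENNReal.ofReal (d ^ 2 / (2 * r)) := by
  rw [Measure.volume_eq_prod, Measure.prod_apply measurableSet_defaultTriangle]
  simp_rw [volume_preimage_mk_defaultTriangle hr]
  rw [lintegral_indicator measurableSet_Icc, ← ofReal_integral_eq_lintegral_ofReal,
    integral_Icc_eq_integral_Ioc, ← intervalIntegral.integral_of_le hd]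
  · rw [intervalIntegral.integral_div, intervalIntegral.integral_sub intervalIntegrable_const
      intervalIntegral.intervalIntegrable_id, integral_id]
    congr 1
    simp
    ring
  · exact Continuous.integrableOn_Icc (by fun_prop)
  · filter_upwards [ae_restrict_mem measurableSet_Icc] with x hx
    exact div_nonneg (sub_nonneg.2 hx.2) hr.le

lemma volume_preimage_swap_defaultTriangle (hr : 0 < r) (hd : 0 ≤ d) :
    volume (Prod.swap ⁻¹' defaultTriangle r d) = ENNReal.ofReal (d ^ 2 / (2 * r)) := by
  rw [Measure.volume_eq_prod, Measure.measurePreserving_swap.measure_preimage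
    measurableSet_defaultTriangle.nullMeasurableSet, ← Measure.volume_eq_prod,
    volume_defaultTriangle hr hd]

lemma defaultTriangle_subset_square {s : ℝ} (hr : 0 < r) (hds : d < s) (h : d ≤ s * r) :
    defaultTriangle r d ⊆ Icc 0 s ×ˢ Icc 0 s := by
  rintro ⟨x, y⟩ ⟨hx, hxy, hd⟩
  -- `y ≤ max d (d / r)`, according as `r ≥ 1` or `r ≤ 1`
  have hys : y ≤ s := by rcases le_total r 1 with hr1 | hr1 <;> nlinarith
  exact ⟨⟨hx, by linarith⟩, hx.trans hxy, hys⟩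

end defaultTriangle

lemma jointDefault_inter_square_eq {r₁ r₂ d s : ℝ} (hr₁ : 0 < r₁) (hr₂ : 0 < r₂)
    (hsum : 1 ≤ r₁ + r₂) (hds : d < s) (h1 : d ≤ s * r₁) (h2 : d ≤ s * r₂) :
    {p : ℝ × ℝ | (1 - r₁) * p.1 + r₁ * p.2 ≤ d ∧ r₂ * p.1 + (1 - r₂) * p.2 ≤ d}
        ∩ Icc 0 s ×ˢ Icc 0 s
      = defaultTriangle r₁ d ∪ Prod.swap ⁻¹' defaultTriangle r₂ d := by
  apply Subset.antisymm
  · rintro ⟨x, y⟩ ⟨⟨h₁, h₂⟩, ⟨hx, -⟩, hy, -⟩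
    rcases le_total x y with hxy | hyx
    · exact Or.inl ⟨hx, hxy, h₁⟩
    · exact Or.inr ⟨hy, hyx, show (1 - r₂) * y + r₂ * x ≤ d by linarith⟩
  · refine subset_inter ?_ (union_subset (defaultTriangle_subset_square hr₁ hds h1) ?_)
    · rintro ⟨x, y⟩ (⟨-, hxy : x ≤ y, h₁⟩ | ⟨-, hyx : y ≤ x, h₂ : (1 - r₂) * y + r₂ * x ≤ d⟩)
      · exact ⟨h₁, by nlinarith [mul_nonneg (sub_nonneg.2 hsum) (sub_nonneg.2 hxy)]⟩
      · exact ⟨by nlinarith [mul_nonneg (sub_nonneg.2 hsum) (sub_nonneg.2 hyx)], by linarith⟩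
    · rw [← preimage_swap_prod]
      exact preimage_mono (defaultTriangle_subset_square hr₂ hds h2)

lemma defaultTriangle_inter_preimage_swap_subset_diagonal (r₁ r₂ d : ℝ) :
    defaultTriangle r₁ d ∩ Prod.swap ⁻¹' defaultTriangle r₂ d ⊆ diagonal ℝ :=
  fun _ ⟨⟨_, hxy, _⟩, ⟨_, hyx, _⟩⟩ ↦ le_antisymm hxy hyx

theorem prob_joint_default_sum_ge_one_general
    {Ω : Type*} [MeasurableSpace Ω] (P : Measure Ω) [IsProbabilityMeasure P]
    (s d : ℝ) (hd : 0 < d) (hds : d < s)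
    (X Y : Ω → ℝ) (hXm : Measurable X) (hYm : Measurable Y)
    (hX : P.map X = uniformOnIcc s) (hY : P.map Y = uniformOnIcc s)
    (hXY : IndepFun X Y P)
    (r₁ r₂ : ℝ)
    (hsum : 1 ≤ r₁ + r₂) (h1 : d ≤ s * r₁) (h2 : d ≤ s * r₂) :
    P {ω | (1 - r₁) * X ω + r₁ * Y ω ≤ d ∧ r₂ * X ω + (1 - r₂) * Y ω ≤ d}
      = ENNReal.ofReal ((1 / 2) * (d / s) ^ 2 * (1 / r₁ + 1 / r₂)) := by
  have hs : 0 < s := hd.trans hds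
  have hr₁ : 0 < r₁ := pos_of_mul_pos_right (hd.trans_le h1) hs.le
  have hr₂ : 0 < r₂ := pos_of_mul_pos_right (hd.trans_le h2) hs.le
  set T := {p : ℝ × ℝ | (1 - r₁) * p.1 + r₁ * p.2 ≤ d ∧ r₂ * p.1 + (1 - r₂) * p.2 ≤ d}
  have hT : MeasurableSet T := by measurability
  have hlaw : P.map (fun ω ↦ (X ω, Y ω)) = (uniformOnIcc s).prod (uniformOnIcc s) := by
    rw [(indepFun_iff_map_prod_eq_prod_map_map hXm.aemeasurable hYm.aemeasurable).1 hXY, hX, hY]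
  have hdiag : volume (defaultTriangle r₁ d ∩ Prod.swap ⁻¹' defaultTriangle r₂ d) = 0 :=
    measure_mono_null (defaultTriangle_inter_preimage_swap_subset_diagonal r₁ r₂ d)
      (Measure.volume_eq_prod ℝ ℝ ▸ Measure.prod_diagonal_eq_zero _ _)
  calc P ((fun ω ↦ (X ω, Y ω)) ⁻¹' T)
      = (uniformOnIcc s).prod (uniformOnIcc s) T := by
        rw [← hlaw, Measure.map_apply (hXm.prodMk hYm) hT]
    _ = (ENNReal.ofReal s)⁻¹ ^ 2 *
          (ENNReal.ofReal (d ^ 2 / (2 * r₁)) + ENNReal.ofReal (d ^ 2 / (2 * r₂))) := by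
        rw [uniformOnIcc_prod_apply, jointDefault_inter_square_eq hr₁ hr₂ hsum hds h1 h2,
          measure_union₀ (measurableSet_defaultTriangle.preimage measurable_swap).nullMeasurableSet
            hdiag, volume_defaultTriangle hr₁ hd.le, volume_preimage_swap_defaultTriangle hr₂ hd.le]
    _ = ENNReal.ofReal ((1 / 2) * (d / s) ^ 2 * (1 / r₁ + 1 / r₂)) := by
        rw [← ENNReal.ofReal_add (by positivity) (by positivity), ← ENNReal.ofReal_inv_of_pos hs,
          ← ENNReal.ofReal_pow (by positivity), ← ENNReal.ofReal_mul (by positivity)]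
        congr 1
        field_simp

/-- for `r₁ + r₂ ≥ 1` with `d ≤ s·r₁` and `d ≤ s·r₂`, the probability
of joint default is `(1/2)·(d/s)²·(1/r₁ + 1/r₂)`. -/
theorem prob_joint_default_sum_ge_one
    {Ω : Type*} [MeasurableSpace Ω] (P : Measure Ω) [IsProbabilityMeasure P]
    (s d : ℝ) (hd : 0 < d) (hds : d < s)
    (X Y : Ω → ℝ) (hXm : Measurable X) (hYm : Measurable Y)
    (hX : P.map X = uniformOnIcc s) (hY : P.map Y = uniformOnIcc s)
    (hXY : IndepFun X Y P)
    (r₁ r₂ : ℝ) (hr₁ : r₁ ∈ Icc (0 : ℝ) 1) (hr₂ : r₂ ∈ Icc (0 : ℝ) 1)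
    (hsum : 1 ≤ r₁ + r₂) (h1 : d ≤ s * r₁) (h2 : d ≤ s * r₂) :
    P {ω | (1 - r₁) * X ω + r₁ * Y ω ≤ d ∧ r₂ * X ω + (1 - r₂) * Y ω ≤ d}
      = ENNReal.ofReal ((1 / 2) * (d / s) ^ 2 * (1 / r₁ + 1 / r₂)) :=
  prob_joint_default_sum_ge_one_general P s d hd hds X Y hXm hYm hX hY hXY r₁ r₂ hsum h1 h2
end

section
/- Let 0 < d < s and let X, Y be independent random variables each uniformly distributed on [0,s]. Let r₁, r₂ ∈ [0,1] with r₁ + r₂ < 1, (r₁, r₂) ≠ (0,0), d ≤ s(1−r₁) and d ≤ s(1−r₂). Then the diversified positions ν₁ = (1−r₁)X + r₁Y and ν₂ = r₂X + (1−r₂)Y satisfy P(ν₁ ≤ d and ν₂ ≤ d) > P(X ≤ d and Y ≤ d) = d²/s²; that is, diversification strictly increases the probability of joint default. -/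
/-!
On the event `{X ≤ d, Y ≤ d}` both positions are convex combinations of numbers `≤ d`, so it is
contained in the joint-default event. If `r₁ > 0`, the joint-default event also contains the disjoint
box `{d < X ≤ d + ε, Y ≤ ε}` for `ε = min (r₁ d) (s - d)`: moving `X` a little beyond `d` is
compensated in `ν₁` by a small `Y`, while `ν₂ ≤ r₂ (d + ε) + (1 - r₂) ε ≤ (r₁ + r₂) d ≤ d`.
This box has probability `(ε / s)² > 0`. The case `r₂ > 0` is the mirror image under `X ↔ Y`.
-/

open MeasureTheory ProbabilityTheory Set

section Uniform

variable {s : ℝ}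

instance : IsFiniteMeasure (uniformOnIcc s) := by
  refine ⟨?_⟩
  rw [uniformOnIcc, Measure.smul_apply, Measure.restrict_apply_univ, Real.volume_Icc, sub_zero,
    smul_eq_mul]
  rcases le_or_gt s 0 with hs | hs
  · simp [ENNReal.ofReal_of_nonpos hs]
  · rw [ENNReal.inv_mul_cancel (ENNReal.ofReal_pos.2 hs).ne' ENNReal.ofReal_ne_top]
    exact ENNReal.one_lt_top

lemma uniformOnIcc_Iic (hs : 0 < s) {a : ℝ} (has : a ≤ s) :
    uniformOnIcc s (Iic a) = ENNReal.ofReal (a / s) := by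
  have hinter : Iic a ∩ Icc 0 s = Icc 0 a := by
    ext x
    simp only [mem_inter_iff, mem_Iic, mem_Icc]
    constructor
    · rintro ⟨hxa, hx0, -⟩
      exact ⟨hx0, hxa⟩
    · rintro ⟨hx0, hxa⟩
      exact ⟨hxa, hx0, hxa.trans has⟩
  rw [uniformOnIcc, Measure.smul_apply, Measure.restrict_apply measurableSet_Iic, hinter,
    Real.volume_Icc, sub_zero, smul_eq_mul, ENNReal.ofReal_div_of_pos hs, ENNReal.div_eq_inv_mul]

lemma uniformOnIcc_Ioc (hs : 0 < s) {a b : ℝ} (ha : 0 ≤ a) (hbs : b ≤ s) :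
    uniformOnIcc s (Ioc a b) = ENNReal.ofReal ((b - a) / s) := by
  have hinter : Ioc a b ∩ Icc 0 s = Ioc a b :=
    inter_eq_left.2 fun x hx ↦ ⟨ha.trans hx.1.le, hx.2.trans hbs⟩
  rw [uniformOnIcc, Measure.smul_apply, Measure.restrict_apply measurableSet_Ioc, hinter,
    Real.volume_Ioc, smul_eq_mul, ENNReal.ofReal_div_of_pos hs, ENNReal.div_eq_inv_mul]

lemma uniformOnIcc_prod_Iic_prod_Iic (hs : 0 < s) {a : ℝ} (ha : 0 ≤ a) (has : a ≤ s) :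
    ((uniformOnIcc s).prod (uniformOnIcc s)) (Iic a ×ˢ Iic a) = ENNReal.ofReal (a ^ 2 / s ^ 2) := by
  rw [Measure.prod_prod, uniformOnIcc_Iic hs has,
    ← ENNReal.ofReal_mul (div_nonneg ha hs.le)]
  congr 1
  ring

end Uniform

def jointDefaultRegion (r₁ r₂ d : ℝ) : Set (ℝ × ℝ) :=
  {p | (1 - r₁) * p.1 + r₁ * p.2 ≤ d ∧ r₂ * p.1 + (1 - r₂) * p.2 ≤ d}

section JointDefaultRegion

variable {r₁ r₂ d : ℝ}

lemma measurableSet_jointDefaultRegion : MeasurableSet (jointDefaultRegion r₁ r₂ d) := by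
  rw [jointDefaultRegion, ofPred_and]
  exact (measurableSet_le (by fun_prop) measurable_const).inter
    (measurableSet_le (by fun_prop) measurable_const)

lemma preimage_swap_jointDefaultRegion :
    Prod.swap ⁻¹' jointDefaultRegion r₂ r₁ d = jointDefaultRegion r₁ r₂ d := by
  ext ⟨x, y⟩
  simp only [jointDefaultRegion, mem_preimage, Prod.swap_prod_mk, mem_ofPred_eq]
  rw [and_comm, add_comm ((1 - r₂) * y), add_comm (r₁ * y)]

variable (hr₁ : 0 ≤ r₁) (hr₂ : 0 ≤ r₂) (hsum : r₁ + r₂ ≤ 1)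
include hr₁ hr₂ hsum

lemma Iic_prod_Iic_subset_jointDefaultRegion : Iic d ×ˢ Iic d ⊆ jointDefaultRegion r₁ r₂ d := by
  rintro ⟨x, y⟩ ⟨hx, hy⟩
  simp only [mem_Iic] at hx hy
  constructor
  · nlinarith [mul_le_mul_of_nonneg_left hx (by linarith : 0 ≤ 1 - r₁),
      mul_le_mul_of_nonneg_left hy hr₁]
  · nlinarith [mul_le_mul_of_nonneg_left hx hr₂,
      mul_le_mul_of_nonneg_left hy (by linarith : 0 ≤ 1 - r₂)]

lemma Ioc_prod_Iic_subset_jointDefaultRegion (hd : 0 ≤ d) {ε : ℝ} (hε : ε ≤ r₁ * d) :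
    Ioc d (d + ε) ×ˢ Iic ε ⊆ jointDefaultRegion r₁ r₂ d := by
  rintro ⟨x, y⟩ ⟨⟨-, hx⟩, hy⟩
  simp only [mem_Iic] at hy
  constructor
  · nlinarith [mul_le_mul_of_nonneg_left hx (by linarith : 0 ≤ 1 - r₁),
      mul_le_mul_of_nonneg_left hy hr₁]
  · nlinarith [mul_le_mul_of_nonneg_left hx hr₂,
      mul_le_mul_of_nonneg_left hy (by linarith : 0 ≤ 1 - r₂)]

end JointDefaultRegion

section Strict

variable {s d r₁ r₂ : ℝ} (hd : 0 < d) (hds : d < s) (hr₂ : 0 ≤ r₂) (hsum : r₁ + r₂ ≤ 1)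
include hd hds hr₂ hsum

lemma uniformOnIcc_prod_Iic_prod_Iic_lt_jointDefaultRegion_of_pos (hr₁ : 0 < r₁) :
    ((uniformOnIcc s).prod (uniformOnIcc s)) (Iic d ×ˢ Iic d)
      < ((uniformOnIcc s).prod (uniformOnIcc s)) (jointDefaultRegion r₁ r₂ d) := by
  set μ := (uniformOnIcc s).prod (uniformOnIcc s)
  have hs : 0 < s := hd.trans hds
  set ε := min (r₁ * d) (s - d)
  have hε_pos : 0 < ε := lt_min (mul_pos hr₁ hd) (by linarith)
  have hεs : d + ε ≤ s := by linarith [min_le_right (r₁ * d) (s - d)]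
  have hdisj : Disjoint (Iic d ×ˢ Iic d) (Ioc d (d + ε) ×ˢ Iic ε) :=
    disjoint_prod.2 (Or.inl (disjoint_left.2 fun _ hx hx' ↦ not_lt.2 hx hx'.1))
  have hbox_pos : μ (Ioc d (d + ε) ×ˢ Iic ε) ≠ 0 := by
    have hεs' : 0 < ε / s := div_pos hε_pos hs
    rw [Measure.prod_prod, uniformOnIcc_Ioc hs hd.le hεs, uniformOnIcc_Iic hs (by linarith),
      add_sub_cancel_left]
    exact mul_ne_zero (ENNReal.ofReal_pos.2 hεs').ne' (ENNReal.ofReal_pos.2 hεs').ne'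
  calc μ (Iic d ×ˢ Iic d)
      < μ (Iic d ×ˢ Iic d) + μ (Ioc d (d + ε) ×ˢ Iic ε) :=
        ENNReal.lt_add_right (measure_ne_top _ _) hbox_pos
    _ = μ (Iic d ×ˢ Iic d ∪ Ioc d (d + ε) ×ˢ Iic ε) :=
        (measure_union hdisj (measurableSet_Ioc.prod measurableSet_Iic)).symm
    _ ≤ μ (jointDefaultRegion r₁ r₂ d) := measure_mono (union_subset
        (Iic_prod_Iic_subset_jointDefaultRegion hr₁.le hr₂ hsum)
        (Ioc_prod_Iic_subset_jointDefaultRegion hr₁.le hr₂ hsum hd.le (min_le_left _ _)))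

lemma uniformOnIcc_prod_Iic_prod_Iic_lt_jointDefaultRegion (hr₁ : 0 ≤ r₁)
    (hne : (r₁, r₂) ≠ (0, 0)) :
    ((uniformOnIcc s).prod (uniformOnIcc s)) (Iic d ×ˢ Iic d)
      < ((uniformOnIcc s).prod (uniformOnIcc s)) (jointDefaultRegion r₁ r₂ d) := by
  rcases hr₁.lt_or_eq with hr₁_pos | rfl
  · exact uniformOnIcc_prod_Iic_prod_Iic_lt_jointDefaultRegion_of_pos hd hds hr₂ hsum hr₁_pos
  · have hr₂_pos : 0 < r₂ := hr₂.lt_of_ne fun h ↦ hne (by rw [← h])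
    rw [← preimage_swap_jointDefaultRegion, Measure.measurePreserving_swap.measure_preimage
      measurableSet_jointDefaultRegion.nullMeasurableSet]
    exact uniformOnIcc_prod_Iic_prod_Iic_lt_jointDefaultRegion_of_pos hd hds le_rfl
      (by linarith) hr₂_pos

end Strict

theorem diversification_increases_joint_default_general
    {Ω : Type*} [MeasurableSpace Ω] (P : Measure Ω) [IsProbabilityMeasure P]
    (s d : ℝ) (hd : 0 < d) (hds : d < s)
    (X Y : Ω → ℝ) (hXm : Measurable X) (hYm : Measurable Y)
    (hX : P.map X = uniformOnIcc s) (hY : P.map Y = uniformOnIcc s)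
    (hXY : IndepFun X Y P)
    (r₁ r₂ : ℝ) (hr₁ : r₁ ∈ Icc (0 : ℝ) 1) (hr₂ : r₂ ∈ Icc (0 : ℝ) 1)
    (hsum : r₁ + r₂ < 1) (hne : (r₁, r₂) ≠ (0, 0)) :
    P {ω | (1 - r₁) * X ω + r₁ * Y ω ≤ d ∧ r₂ * X ω + (1 - r₂) * Y ω ≤ d}
        > P {ω | X ω ≤ d ∧ Y ω ≤ d} ∧
    P {ω | X ω ≤ d ∧ Y ω ≤ d} = ENNReal.ofReal (d ^ 2 / s ^ 2) := by
  have hlaw : P.map (fun ω ↦ (X ω, Y ω)) = (uniformOnIcc s).prod (uniformOnIcc s) := by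
    rw [(indepFun_iff_map_prod_eq_prod_map_map hXm.aemeasurable hYm.aemeasurable).1 hXY, hX, hY]
  have hP {S : Set (ℝ × ℝ)} (hS : MeasurableSet S) :
      P ((fun ω ↦ (X ω, Y ω)) ⁻¹' S) = ((uniformOnIcc s).prod (uniformOnIcc s)) S := by
    rw [← hlaw, Measure.map_apply (hXm.prodMk hYm) hS]
  change P ((fun ω ↦ (X ω, Y ω)) ⁻¹' jointDefaultRegion r₁ r₂ d)
      > P ((fun ω ↦ (X ω, Y ω)) ⁻¹' (Iic d ×ˢ Iic d)) ∧
    P ((fun ω ↦ (X ω, Y ω)) ⁻¹' (Iic d ×ˢ Iic d)) = _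
  rw [hP measurableSet_jointDefaultRegion, hP (measurableSet_Iic.prod measurableSet_Iic)]
  exact ⟨uniformOnIcc_prod_Iic_prod_Iic_lt_jointDefaultRegion hd hds hr₂.1 hsum.le hr₁.1 hne,
    uniformOnIcc_prod_Iic_prod_Iic (hd.trans hds) hd.le hds.le⟩

/-- if `r₁ + r₂ < 1`, `(r₁, r₂) ≠ (0,0)`, `d ≤ s(1-r₁)` and `d ≤ s(1-r₂)`,
then diversification strictly increases the probability of joint default:
`P(ν₁ ≤ d, ν₂ ≤ d) > P(X ≤ d, Y ≤ d) = d²/s²`. -/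
theorem diversification_increases_joint_default
    {Ω : Type*} [MeasurableSpace Ω] (P : Measure Ω) [IsProbabilityMeasure P]
    (s d : ℝ) (hd : 0 < d) (hds : d < s)
    (X Y : Ω → ℝ) (hXm : Measurable X) (hYm : Measurable Y)
    (hX : P.map X = uniformOnIcc s) (hY : P.map Y = uniformOnIcc s)
    (hXY : IndepFun X Y P)
    (r₁ r₂ : ℝ) (hr₁ : r₁ ∈ Icc (0 : ℝ) 1) (hr₂ : r₂ ∈ Icc (0 : ℝ) 1)
    (hsum : r₁ + r₂ < 1) (hne : (r₁, r₂) ≠ (0, 0))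
    (h1 : d ≤ s * (1 - r₁)) (h2 : d ≤ s * (1 - r₂)) :
    P {ω | (1 - r₁) * X ω + r₁ * Y ω ≤ d ∧ r₂ * X ω + (1 - r₂) * Y ω ≤ d}
        > P {ω | X ω ≤ d ∧ Y ω ≤ d} ∧
    P {ω | X ω ≤ d ∧ Y ω ≤ d} = ENNReal.ofReal (d ^ 2 / s ^ 2) :=
  diversification_increases_joint_default_general P s d hd hds X Y hXm hYm hX hY hXY r₁ r₂ hr₁ hr₂
    hsum hne
end

section
/- Let 0 < d, let X and Y be independent random variables each uniformly distributed on [0,s], and let r₁, r₂ ∈ [0,1] satisfy 2d ≤ s(1 − r₁ + r₂) and 2d ≤ s(1 + r₁ − r₂). Then the aggregate position R_total = (1−r₁+r₂)X + (1+r₁−r₂)Y − 2d satisfies P(R_total ≤ 0) ≥ P(X + Y − 2d ≤ 0), with equality if and only if r₁ = r₂. (Theorem 3.4.) -/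
/-!
Under the two hypotheses the triangle `{a x + b y ≤ 2d}` with `a = 1 - r₁ + r₂`,
`b = 1 + r₁ - r₂` lies inside the square `[0, s]²`, so the joint uniform law of `(X, Y)` gives it
probability `(2d)² / (2 a b s²)`. Since `a + b = 2`, the product `a b = 1 - (r₁ - r₂)²` is at
most `1`, with equality exactly when `r₁ = r₂`.
-/

open MeasureTheory ProbabilityTheory Set

lemma IndepFun.measure_setOf_mem_eq_prod {Ω α β : Type*} [MeasurableSpace Ω]
    [MeasurableSpace α] [MeasurableSpace β] {P : Measure Ω} [IsFiniteMeasure P]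
    {X : Ω → α} {Y : Ω → β} {μ : Measure α} {ν : Measure β}
    (hXm : Measurable X) (hYm : Measurable Y) (hX : P.map X = μ) (hY : P.map Y = ν)
    (hXY : IndepFun X Y P) {S : Set (α × β)} (hS : MeasurableSet S) :
    P {ω | (X ω, Y ω) ∈ S} = (μ.prod ν) S := by
  rw [← hX, ← hY,
    ← (indepFun_iff_map_prod_eq_prod_map_map hXm.aemeasurable hYm.aemeasurable).mp hXY,
    Measure.map_apply (hXm.prodMk hYm) hS]
  rfl

section Triangle

variable {a b c s : ℝ}

lemma volume_restrict_Icc_setOf_add_mul_le (ha : 0 ≤ a) (hb : 0 < b) (hcs : c ≤ b * s)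
    {x : ℝ} (hx : 0 ≤ x) :
    volume.restrict (Icc 0 s) {y | a * x + b * y ≤ c} = ENNReal.ofReal ((c - a * x) / b) := by
  have hslice : {y | a * x + b * y ≤ c} ∩ Icc 0 s = Icc 0 ((c - a * x) / b) := by
    ext y
    simp only [mem_inter_iff, mem_ofPred_eq, mem_Icc, le_div_iff₀ hb]
    constructor
    · rintro ⟨h, hy, -⟩
      exact ⟨hy, by linarith⟩
    · rintro ⟨hy, h⟩
      exact ⟨by linarith, hy, by nlinarith⟩
  rw [Measure.restrict_apply (measurableSet_le (by fun_prop) measurable_const), hslice,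
    Real.volume_Icc, sub_zero]

lemma setLIntegral_Icc_ofReal_sub_mul_div (ha : 0 < a) (hb : 0 < b) (hc : 0 ≤ c)
    (hcs : c ≤ a * s) :
    ∫⁻ x in Icc 0 s, ENNReal.ofReal ((c - a * x) / b) = ENNReal.ofReal (c ^ 2 / (2 * a * b)) := by
  have hca : 0 ≤ c / a := by positivity
  have hcas : c / a ≤ s := by rwa [div_le_iff₀' ha]
  have htail : ∫⁻ x in Ioc (c / a) s, ENNReal.ofReal ((c - a * x) / b) = 0 := by
    refine setLIntegral_eq_zero measurableSet_Ioc fun x hx => ?_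
    have : c < a * x := (div_lt_iff₀' ha).mp hx.1
    simp only [Pi.zero_apply, ENNReal.ofReal_eq_zero]
    exact div_nonpos_of_nonpos_of_nonneg (by linarith) hb.le
  rw [← Icc_union_Ioc_eq_Icc hca hcas, lintegral_union measurableSet_Ioc
    (disjoint_left.mpr fun x hx hx' => hx'.1.not_ge hx.2), htail, add_zero,
    ← ofReal_integral_eq_lintegral_ofReal
      (by fun_prop : Continuous fun x => (c - a * x) / b).integrableOn_Icc,
    integral_Icc_eq_integral_Ioc, ← intervalIntegral.integral_of_le hca]
  · congr 1
    rw [intervalIntegral.integral_div, intervalIntegral.integral_sub intervalIntegrable_const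
      (intervalIntegral.intervalIntegrable_id.const_mul a), intervalIntegral.integral_const,
      intervalIntegral.integral_const_mul, integral_id, smul_eq_mul]
    field_simp
    ring
  · refine (ae_restrict_mem measurableSet_Icc).mono fun x hx => ?_
    have : a * x ≤ c := (le_div_iff₀' ha).mp hx.2
    exact div_nonneg (by linarith) hb.le

lemma volume_restrict_Icc_prod_setOf_add_mul_le (ha : 0 < a) (hb : 0 < b) (hc : 0 ≤ c)
    (hcas : c ≤ a * s) (hcbs : c ≤ b * s) :
    ((volume.restrict (Icc 0 s)).prod (volume.restrict (Icc 0 s)))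
        {p : ℝ × ℝ | a * p.1 + b * p.2 ≤ c} = ENNReal.ofReal (c ^ 2 / (2 * a * b)) := by
  rw [Measure.prod_apply (measurableSet_le (by fun_prop) measurable_const),
    ← setLIntegral_Icc_ofReal_sub_mul_div ha hb hc hcas]
  exact setLIntegral_congr_fun measurableSet_Icc fun x hx =>
    volume_restrict_Icc_setOf_add_mul_le ha.le hb hcbs hx.1

lemma uniformOnIcc_prod_setOf_add_mul_le (hs : 0 < s) (ha : 0 < a) (hb : 0 < b) (hc : 0 ≤ c)
    (hcas : c ≤ a * s) (hcbs : c ≤ b * s) :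
    ((uniformOnIcc s).prod (uniformOnIcc s)) {p : ℝ × ℝ | a * p.1 + b * p.2 ≤ c}
      = ENNReal.ofReal (c ^ 2 / (2 * a * b * s ^ 2)) := by
  rw [uniformOnIcc, Measure.prod_smul_left, Measure.prod_smul_right, Measure.smul_apply,
    Measure.smul_apply, volume_restrict_Icc_prod_setOf_add_mul_le ha hb hc hcas hcbs,
    smul_eq_mul, smul_eq_mul, ← ENNReal.ofReal_inv_of_pos hs,
    ← ENNReal.ofReal_mul (by positivity), ← ENNReal.ofReal_mul (by positivity)]
  congr 1
  field_simp

lemma measure_setOf_add_mul_le_of_uniformOnIcc {Ω : Type*} [MeasurableSpace Ω]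
    {P : Measure Ω} [IsFiniteMeasure P] {X Y : Ω → ℝ} (hXm : Measurable X)
    (hYm : Measurable Y) (hX : P.map X = uniformOnIcc s) (hY : P.map Y = uniformOnIcc s)
    (hXY : IndepFun X Y P) (hs : 0 < s) (ha : 0 < a) (hb : 0 < b) (hc : 0 ≤ c)
    (hcas : c ≤ a * s) (hcbs : c ≤ b * s) :
    P {ω | a * X ω + b * Y ω ≤ c} = ENNReal.ofReal (c ^ 2 / (2 * a * b * s ^ 2)) := by
  rw [← uniformOnIcc_prod_setOf_add_mul_le hs ha hb hc hcas hcbs]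
  exact IndepFun.measure_setOf_mem_eq_prod hXm hYm hX hY hXY
    (measurableSet_le (f := fun p : ℝ × ℝ => a * p.1 + b * p.2) (by fun_prop) measurable_const)

end Triangle

theorem aggregate_loss_comparison_general
    {Ω : Type*} [MeasurableSpace Ω] (P : Measure Ω) [IsProbabilityMeasure P]
    (s d : ℝ) (hd : 0 < d)
    (X Y : Ω → ℝ) (hXm : Measurable X) (hYm : Measurable Y)
    (hX : P.map X = uniformOnIcc s) (hY : P.map Y = uniformOnIcc s)
    (hXY : IndepFun X Y P)
    (r₁ r₂ : ℝ)
    (h1 : 2 * d ≤ s * (1 - r₁ + r₂)) (h2 : 2 * d ≤ s * (1 + r₁ - r₂)) :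
    P {ω | (1 - r₁ + r₂) * X ω + (1 + r₁ - r₂) * Y ω - 2 * d ≤ 0}
        ≥ P {ω | X ω + Y ω - 2 * d ≤ 0} ∧
    (P {ω | (1 - r₁ + r₂) * X ω + (1 + r₁ - r₂) * Y ω - 2 * d ≤ 0}
        = P {ω | X ω + Y ω - 2 * d ≤ 0} ↔ r₁ = r₂) := by
  have hs : 0 < s := by nlinarith
  have hprob a b (ha : 0 < a) (hb : 0 < b) (h1 : 2 * d ≤ s * a) (h2 : 2 * d ≤ s * b) :
      P {ω | a * X ω + b * Y ω - 2 * d ≤ 0}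
        = ENNReal.ofReal ((2 * d) ^ 2 / (2 * s ^ 2) / (a * b)) := by
    simp only [sub_nonpos]
    rw [measure_setOf_add_mul_le_of_uniformOnIcc hXm hYm hX hY hXY hs ha hb (by positivity)
      (by linarith) (by linarith)]
    congr 1
    field_simp
  have ha : 0 < 1 - r₁ + r₂ := pos_of_mul_pos_right (by linarith) hs.le
  have hb : 0 < 1 + r₁ - r₂ := pos_of_mul_pos_right (by linarith) hs.le
  have hab : (1 - r₁ + r₂) * (1 + r₁ - r₂) = 1 - (r₁ - r₂) ^ 2 := by ring
  have hab_pos : 0 < 1 - (r₁ - r₂) ^ 2 := hab ▸ mul_pos ha hb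
  have hP_undiversified := hprob 1 1 one_pos one_pos (by linarith) (by linarith)
  simp only [one_mul, mul_one, div_one] at hP_undiversified
  rw [hP_undiversified, hprob _ _ ha hb h1 h2, hab, ge_iff_le,
    ENNReal.ofReal_eq_ofReal_iff (by positivity) (by positivity)]
  refine ⟨ENNReal.ofReal_le_ofReal (le_div_self (by positivity) hab_pos (by nlinarith)), ?_⟩
  rw [div_eq_mul_inv, mul_eq_left₀ (by positivity), inv_eq_one, sub_eq_self,
    pow_eq_zero_iff two_ne_zero, sub_eq_zero]

/-- Theorem 3.4: if `2d ≤ s(1 - r₁ + r₂)` and `2d ≤ s(1 + r₁ - r₂)`, then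
the aggregate position `R_total = (1-r₁+r₂)X + (1+r₁-r₂)Y - 2d` satisfies
`P(R_total ≤ 0) ≥ P(X + Y - 2d ≤ 0)`, with equality iff `r₁ = r₂`. -/
theorem aggregate_loss_comparison
    {Ω : Type*} [MeasurableSpace Ω] (P : Measure Ω) [IsProbabilityMeasure P]
    (s d : ℝ) (hd : 0 < d)
    (X Y : Ω → ℝ) (hXm : Measurable X) (hYm : Measurable Y)
    (hX : P.map X = uniformOnIcc s) (hY : P.map Y = uniformOnIcc s)
    (hXY : IndepFun X Y P)
    (r₁ r₂ : ℝ) (hr₁ : r₁ ∈ Icc (0 : ℝ) 1) (hr₂ : r₂ ∈ Icc (0 : ℝ) 1)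
    (h1 : 2 * d ≤ s * (1 - r₁ + r₂)) (h2 : 2 * d ≤ s * (1 + r₁ - r₂)) :
    P {ω | (1 - r₁ + r₂) * X ω + (1 + r₁ - r₂) * Y ω - 2 * d ≤ 0}
        ≥ P {ω | X ω + Y ω - 2 * d ≤ 0} ∧
    (P {ω | (1 - r₁ + r₂) * X ω + (1 + r₁ - r₂) * Y ω - 2 * d ≤ 0}
        = P {ω | X ω + Y ω - 2 * d ≤ 0} ↔ r₁ = r₂) :=
  aggregate_loss_comparison_general P s d hd X Y hXm hYm hX hY hXY r₁ r₂ h1 h2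
end
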